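/- arXiv:2208.02316 — 2 statements merged into one kernel-verified Lean document; each statement's English description precedes it below -/
import Mathlib

section
/- Under assumptions (G1)–(G3), there exists a constant C > 0, depending only on d, s₁, s₂, α, β, such that for every a > 0 and every u ∈ 𝒫_{∞,a} one has I(u) ≥ C(|∇_{s₁}u|₂² + |∇_{s₂}u|₂²); in particular the functional I restricted to 𝒫_{∞,a} is coercive. -/
open MeasureTheory Filter Topology ENNReal

noncomputable section

/-- Euclidean space ℝ^d. -/
abbrev Ed (d : ℕ) := EuclideanSpace ℝ (Fin d)

/-- Squared Gagliardo seminorm `|∇_s u|₂²` as an extended nonnegative real. -/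
noncomputable def gagE (d : ℕ) (s : ℝ) (u : Ed d → ℝ) : ℝ≥0∞ :=
  ∫⁻ p : Ed d × Ed d, ENNReal.ofReal ((u p.1 - u p.2)^2 / ‖p.1 - p.2‖ ^ ((d : ℝ) + 2*s))

/-- Squared Gagliardo seminorm `|∇_s u|₂²` as a real number. -/
noncomputable def gagSq (d : ℕ) (s : ℝ) (u : Ed d → ℝ) : ℝ := (gagE d s u).toReal

/-- Membership in `H^{s₁,s₂}(ℝ^d)`. -/
def memH (d : ℕ) (s1 s2 : ℝ) (u : Ed d → ℝ) : Prop :=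
  MemLp u 2 (volume : Measure (Ed d)) ∧ gagE d s1 u < ⊤ ∧ gagE d s2 u < ⊤

/-- Squared norm on `H^{s₁,s₂}`. -/
noncomputable def hnormSq (d : ℕ) (s1 s2 : ℝ) (u : Ed d → ℝ) : ℝ :=
  gagSq d s1 u + gagSq d s2 u + ∫ x : Ed d, (u x)^2

/-- `G(s) = ∫₀^s g(t) dt`. -/
noncomputable def Gfun (g : ℝ → ℝ) (t : ℝ) : ℝ := ∫ τ in (0:ℝ)..t, g τ

/-- `G̃(s) = g(s)s/2 − G(s)`. -/
noncomputable def Gtil (g : ℝ → ℝ) (t : ℝ) : ℝ := g t * t / 2 - Gfun g t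

/-- The fractional bilinear form. -/
noncomputable def bform (d : ℕ) (s : ℝ) (u v : Ed d → ℝ) : ℝ :=
  ∫ p : Ed d × Ed d, (u p.1 - u p.2) * (v p.1 - v p.2) / ‖p.1 - p.2‖ ^ ((d : ℝ) + 2*s)

/-- Weak solution of `(−Δ)^{s₁}u + (−Δ)^{s₂}u + λu + V u = g(u)`. -/
def weakSol (d : ℕ) (s1 s2 : ℝ) (g : ℝ → ℝ) (V : Ed d → ℝ) (lam : ℝ)
    (u : Ed d → ℝ) : Prop :=
  memH d s1 s2 u ∧ ∀ v : Ed d → ℝ, memH d s1 s2 v →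
    bform d s1 u v + bform d s2 u v + lam * ∫ x : Ed d, u x * v x
      + (∫ x : Ed d, V x * u x * v x) = ∫ x : Ed d, g (u x) * v x

/-- `W(x) = ½⟨∇V(x), x⟩`. -/
noncomputable def Wfun (d : ℕ) (V : Ed d → ℝ) (x : Ed d) : ℝ := (1/2) * fderiv ℝ V x x

/-- `Y(x) = (dα/2 − d − 1) W(x) + ⟨∇W(x), x⟩`. -/
noncomputable def Yfun (d : ℕ) (V : Ed d → ℝ) (α : ℝ) (x : Ed d) : ℝ :=
  ((d : ℝ)*α/2 - d - 1) * Wfun d V x + fderiv ℝ (Wfun d V) x x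

/-- The fiber map `(t ⋆ u)(x) = t^{d/2} u(tx)`. -/
noncomputable def tstar (d : ℕ) (t : ℝ) (u : Ed d → ℝ) : Ed d → ℝ :=
  fun x => t ^ ((d : ℝ)/2) * u (t • x)

/-- The functional `I`. -/
noncomputable def Ifun (d : ℕ) (s1 s2 : ℝ) (g : ℝ → ℝ) (u : Ed d → ℝ) : ℝ :=
  (1/2) * gagSq d s1 u + (1/2) * gagSq d s2 u - ∫ x : Ed d, Gfun g (u x)

/-- The Pohozaev functional `P_∞`. -/
noncomputable def Pinf (d : ℕ) (s1 s2 : ℝ) (g : ℝ → ℝ) (u : Ed d → ℝ) : ℝ :=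
  s1 * gagSq d s1 u + s2 * gagSq d s2 u - d * ∫ x : Ed d, Gtil g (u x)

/-- The sphere `S_a`. -/
def Sa (d : ℕ) (s1 s2 a : ℝ) : Set (Ed d → ℝ) :=
  {u | memH d s1 s2 u ∧ (∫ x : Ed d, (u x)^2) = a}

/-- The constraint set `𝒫_{∞,a}`. -/
def Pinfa (d : ℕ) (s1 s2 : ℝ) (g : ℝ → ℝ) (a : ℝ) : Set (Ed d → ℝ) :=
  {u | u ∈ Sa d s1 s2 a ∧ Pinf d s1 s2 g u = 0}

/-- `m_a = inf {I(u) : u ∈ 𝒫_{∞,a}}`. -/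
noncomputable def ma (d : ℕ) (s1 s2 : ℝ) (g : ℝ → ℝ) (a : ℝ) : ℝ :=
  sInf (Ifun d s1 s2 g '' Pinfa d s1 s2 g a)

/-- The functional `J` (with potential). -/
noncomputable def Jfun (d : ℕ) (s1 s2 : ℝ) (g : ℝ → ℝ) (V : Ed d → ℝ) (u : Ed d → ℝ) : ℝ :=
  Ifun d s1 s2 g u + (1/2) * ∫ x : Ed d, V x * (u x)^2

/-- The Pohozaev functional `P` (with potential). -/
noncomputable def Pfun (d : ℕ) (s1 s2 : ℝ) (g : ℝ → ℝ) (V : Ed d → ℝ) (u : Ed d → ℝ) : ℝ :=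
  s1 * gagSq d s1 u + s2 * gagSq d s2 u - (∫ x : Ed d, Wfun d V x * (u x)^2)
    - d * ∫ x : Ed d, Gtil g (u x)

/-- The constraint set `𝒫_a`. -/
def Pa (d : ℕ) (s1 s2 : ℝ) (g : ℝ → ℝ) (V : Ed d → ℝ) (a : ℝ) : Set (Ed d → ℝ) :=
  {u | u ∈ Sa d s1 s2 a ∧ Pfun d s1 s2 g V u = 0}

/-- The functional `I_λ`. -/
noncomputable def Ilam (d : ℕ) (s1 s2 : ℝ) (g : ℝ → ℝ) (lam : ℝ) (u : Ed d → ℝ) : ℝ :=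
  Ifun d s1 s2 g u + (lam/2) * ∫ x : Ed d, (u x)^2

/-- The derivative `I_λ′(u)[v]`. -/
noncomputable def IlamD (d : ℕ) (s1 s2 : ℝ) (g : ℝ → ℝ) (lam : ℝ) (u v : Ed d → ℝ) : ℝ :=
  bform d s1 u v + bform d s2 u v + lam * (∫ x : Ed d, u x * v x) - ∫ x : Ed d, g (u x) * v x

/-- Scaling map `ℋ(u,t)(x) = e^{dt/2} u(e^t x)`. -/
noncomputable def Hmap (d : ℕ) (u : Ed d → ℝ) (t : ℝ) : Ed d → ℝ :=
  fun x => Real.exp ((d : ℝ) * t / 2) * u (Real.exp t • x)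

/-- Radial functions. -/
def IsRadial (d : ℕ) (u : Ed d → ℝ) : Prop := ∃ h : ℝ → ℝ, ∀ x, u x = h ‖x‖

end

theorem statement7
    (d : ℕ) (s1 s2 : ℝ)
    (hs1 : 0 < s1) (hs12 : s1 < s2) (hs2 : s2 < 1)
    (hd1 : 2*s1 < (d : ℝ)) (hd2 : (d : ℝ) < 2*s1*s2/(s2 - s1))
    (g : ℝ → ℝ) (α β : ℝ)
    (hg1cont : Continuous g) (hg1odd : ∀ t : ℝ, g (-t) = - g t)
    (hα : 2 + 4*s2/(d : ℝ) < α) (hαβ : α < β) (hβ : β < 2*(d : ℝ)/((d : ℝ) - 2*s1))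
    (hG2 : ∀ t : ℝ, α * Gfun g t ≤ g t * t ∧ g t * t ≤ β * Gfun g t)
    (hG3diff : Differentiable ℝ (Gtil g))
    (hG3 : ∀ t : ℝ, α * Gtil g t ≤ deriv (Gtil g) t * t)
    :
    ∃ C : ℝ, 0 < C ∧ ∀ a : ℝ, 0 < a → ∀ u ∈ Pinfa d s1 s2 g a,
      C * (gagSq d s1 u + gagSq d s2 u) ≤ Ifun d s1 s2 g u := by
  have hd0 : (0:ℝ) < d := by linarith
  have hs2p : (0:ℝ) < s2 := lt_trans hs1 hs12
  have hα2 : (2:ℝ) < α := by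
    have h1 : 0 < 4*s2/(d:ℝ) := by positivity
    linarith
  -- pointwise facts
  have hGnn : ∀ t, 0 ≤ Gfun g t := by
    intro t
    have h1 := (hG2 t).1
    have h2 := (hG2 t).2
    nlinarith
  have hlb : ∀ t, (α - 2) * Gfun g t ≤ 2 * Gtil g t := by
    intro t
    have h1 := (hG2 t).1
    simp only [Gtil]
    linarith
  have hub : ∀ t, 2 * Gtil g t ≤ (β - 2) * Gfun g t := by
    intro t
    have h2 := (hG2 t).2
    simp only [Gtil]
    linarith
  have hGtnn : ∀ t, 0 ≤ Gtil g t := by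
    intro t
    have := hlb t
    have := hGnn t
    nlinarith
  have hGcont : Continuous (Gfun g) :=
    intervalIntegral.continuous_primitive (fun a b => hg1cont.intervalIntegrable a b) 0
  -- the constant
  have h4 : 4*s2 < (α - 2) * (d:ℝ) := by
    have : 4*s2/(d:ℝ) < α - 2 := by linarith
    calc 4*s2 = (4*s2/(d:ℝ)) * d := by field_simp
    _ < (α - 2) * d := by exact mul_lt_mul_of_pos_right this hd0
  have hDpos : 0 < (α - 2) * (d:ℝ) := mul_pos (by linarith) hd0
  refine ⟨1/2 - 2*s2/((α - 2) * (d:ℝ)), by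
    rw [sub_pos, div_lt_iff₀ hDpos]; linarith, ?_⟩
  intro a ha u hu
  obtain ⟨⟨⟨hL2, hfin1, hfin2⟩, hmass⟩, hP⟩ := hu
  have humeas : AEStronglyMeasurable u (volume : Measure (Ed d)) := hL2.aestronglyMeasurable
  set A := gagSq d s1 u with hAdef
  set B := gagSq d s2 u with hBdef
  have hA : 0 ≤ A := ENNReal.toReal_nonneg
  have hB : 0 ≤ B := ENNReal.toReal_nonneg
  have hPeq : s1 * A + s2 * B = (d:ℝ) * ∫ x : Ed d, Gtil g (u x) := by
    have : s1 * A + s2 * B - (d:ℝ) * ∫ x : Ed d, Gtil g (u x) = 0 := hP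
    linarith
  have hGm : AEStronglyMeasurable (fun x : Ed d => Gfun g (u x)) volume :=
    (hGcont.comp_aestronglyMeasurable humeas)
  by_cases hInt : Integrable (fun x : Ed d => Gtil g (u x)) (volume : Measure (Ed d))
  · -- G ∘ u is integrable by comparison
    have hIntG : Integrable (fun x : Ed d => Gfun g (u x)) (volume : Measure (Ed d)) := by
      refine Integrable.mono' (hInt.const_mul (2/(α-2))) hGm ?_
      filter_upwards with x
      rw [Real.norm_of_nonneg (hGnn _)]
      rw [div_mul_eq_mul_div, le_div_iff₀ (by linarith : (0:ℝ) < α - 2)]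
      nlinarith [hlb (u x)]
    have hcomp : (α - 2) * (∫ x : Ed d, Gfun g (u x)) ≤ 2 * ∫ x : Ed d, Gtil g (u x) := by
      rw [← integral_const_mul, ← integral_const_mul]
      exact integral_mono (hIntG.const_mul _) (hInt.const_mul _) (fun x => hlb (u x))
    set T := ∫ x : Ed d, Gtil g (u x) with hTdef
    set GG := ∫ x : Ed d, Gfun g (u x) with hGGdef
    have hTB : (α - 2) * (d:ℝ) * GG ≤ 2 * s2 * (A + B) := by
      have h1 : (d:ℝ) * ((α-2) * GG) ≤ (d:ℝ) * (2 * T) :=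
        mul_le_mul_of_nonneg_left hcomp (le_of_lt hd0)
      nlinarith
    have hGGle : GG ≤ 2*s2*(A+B)/((α-2)*(d:ℝ)) := by
      rw [le_div_iff₀ hDpos]
      nlinarith
    have hring : 2*s2/((α-2)*(d:ℝ))*(A+B) = 2*s2*(A+B)/((α-2)*(d:ℝ)) := by ring
    show (1/2 - 2*s2/((α - 2) * (d:ℝ))) * (A + B) ≤ (1/2) * A + (1/2) * B - GG
    rw [sub_mul, hring]
    linarith
  · -- degenerate case: all gradient terms vanish and I(u) = 0
    have hT0 : (∫ x : Ed d, Gtil g (u x)) = 0 := integral_undef hInt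
    rw [hT0, mul_zero] at hPeq
    have hm1 := mul_nonneg hs1.le hA
    have hm2 := mul_nonneg hs2p.le hB
    have hs1A : s1 * A = 0 := by linarith
    have hs2B : s2 * B = 0 := by linarith
    have hA0 : A = 0 := by
      rcases mul_eq_zero.mp hs1A with h | h
      · exact absurd h hs1.ne'
      · exact h
    have hB0 : B = 0 := by
      rcases mul_eq_zero.mp hs2B with h | h
      · exact absurd h hs2p.ne'
      · exact h
    have hIntG : ¬ Integrable (fun x : Ed d => Gfun g (u x)) (volume : Measure (Ed d)) := by
      intro hIG
      apply hInt
      refine Integrable.mono' (hIG.const_mul ((β-2)/2)) ((hG3diff.continuous).comp_aestronglyMeasurable humeas) ?_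
      filter_upwards with x
      rw [Real.norm_of_nonneg (hGtnn _)]
      have := hub (u x)
      linarith
    have hG0 : (∫ x : Ed d, Gfun g (u x)) = 0 := integral_undef hIntG
    show (1/2 - 2*s2/((α - 2) * (d:ℝ))) * (A + B) ≤ (1/2) * A + (1/2) * B - ∫ x : Ed d, Gfun g (u x)
    rw [hA0, hB0, hG0]
    simp
end

section
/- Assume (G1)–(G3) and (V1)–(V3), and let a > 0. Then for every u ∈ 𝒫_a one has J(u) ≥ ((1−σ₁)/2 − 2(s₂+σ₂)/(d(α−2)))·(|∇_{s₁}u|₂² + |∇_{s₂}u|₂²), where the constant (1−σ₁)/2 − 2(s₂+σ₂)/(d(α−2)) is positive; consequently J restricted to 𝒫_a is coercive, i.e. J(u) → +∞ as |∇_{s₁}u|₂² + |∇_{s₂}u|₂² → ∞ with u ∈ 𝒫_a. -/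
open MeasureTheory Filter Topology ENNReal

lemma myIntG {d : ℕ} (g : ℝ → ℝ) (α β : ℝ) (hα2 : 2 < α) (hαβ : α < β)
    (hG2 : ∀ t : ℝ, α * Gfun g t ≤ g t * t ∧ g t * t ≤ β * Gfun g t)
    (hGcont : Continuous (Gfun g)) (hGtcont : Continuous (Gtil g))
    (u : Ed d → ℝ) (hu : AEStronglyMeasurable u volume) :
    (∫ x : Ed d, Gfun g (u x)) ≤ (2/(α-2)) * ∫ x : Ed d, Gtil g (u x) := by
  have hGpos : ∀ t, 0 ≤ Gfun g t := by
    intro t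
    nlinarith [(hG2 t).1, (hG2 t).2, hαβ]
  have hGtge : ∀ t, (α-2)/2 * Gfun g t ≤ Gtil g t := by
    intro t
    have h := (hG2 t).1
    simp only [Gtil]
    linarith
  have hGtpos : ∀ t, 0 ≤ Gtil g t := fun t =>
    le_trans (mul_nonneg (by linarith) (hGpos t)) (hGtge t)
  have hle : ∀ t, Gfun g t ≤ 2/(α-2) * Gtil g t := by
    intro t
    rw [div_mul_eq_mul_div, le_div_iff₀ (by linarith : (0:ℝ) < α-2)]
    linarith [hGtge t]
  have hub : ∀ t, Gtil g t ≤ (β/2 - 1) * Gfun g t := by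
    intro t
    have h := (hG2 t).2
    simp only [Gtil]
    linarith
  have hmG : AEStronglyMeasurable (fun x : Ed d => Gfun g (u x)) volume :=
    hGcont.comp_aestronglyMeasurable hu
  have hmGt : AEStronglyMeasurable (fun x : Ed d => Gtil g (u x)) volume :=
    hGtcont.comp_aestronglyMeasurable hu
  by_cases hInt : Integrable (fun x : Ed d => Gtil g (u x)) volume
  · have hbd : Integrable (fun x : Ed d => 2/(α-2) * Gtil g (u x)) volume := hInt.const_mul _
    have hIntG : Integrable (fun x : Ed d => Gfun g (u x)) volume := by
      refine hbd.mono' hmG ?_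
      filter_upwards with x
      rw [Real.norm_eq_abs, abs_of_nonneg (hGpos _)]
      exact hle _
    calc (∫ x : Ed d, Gfun g (u x)) ≤ ∫ x : Ed d, 2/(α-2) * Gtil g (u x) :=
          integral_mono hIntG hbd fun x => hle _
      _ = 2/(α-2) * ∫ x : Ed d, Gtil g (u x) := by rw [integral_const_mul]
  · have hIntG : ¬ Integrable (fun x : Ed d => Gfun g (u x)) volume := by
      intro h
      refine hInt ((h.const_mul (β/2-1)).mono' hmGt ?_)
      filter_upwards with x
      rw [Real.norm_eq_abs, abs_of_nonneg (hGtpos _)]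
      exact hub _
    rw [integral_undef hIntG, integral_undef hInt, mul_zero]

theorem statement18
    (d : ℕ) (s1 s2 : ℝ)
    (hs1 : 0 < s1) (hs12 : s1 < s2) (hs2 : s2 < 1)
    (hd1 : 2*s1 < (d : ℝ)) (hd2 : (d : ℝ) < 2*s1*s2/(s2 - s1))
    (g : ℝ → ℝ) (α β : ℝ)
    (hg1cont : Continuous g) (hg1odd : ∀ t : ℝ, g (-t) = - g t)
    (hα : 2 + 4*s2/(d : ℝ) < α) (hαβ : α < β) (hβ : β < 2*(d : ℝ)/((d : ℝ) - 2*s1))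
    (hG2 : ∀ t : ℝ, α * Gfun g t ≤ g t * t ∧ g t * t ≤ β * Gfun g t)
    (hG3diff : Differentiable ℝ (Gtil g))
    (hG3 : ∀ t : ℝ, α * Gtil g t ≤ deriv (Gtil g) t * t)
    (V : Ed d → ℝ) (σ1 : ℝ)
    (hV1lim : Tendsto V (cocompact (Ed d)) (𝓝 0))
    (hV1sup : (⨆ x : Ed d, V x) = 0)
    (hσ1 : 0 ≤ σ1 ∧ σ1 ≤ ((d : ℝ)*(α-2)-4)/((d : ℝ)*(α-2)))
    (hV1 : ∀ u : Ed d → ℝ, memH d s1 s2 u →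
      |∫ x : Ed d, V x * (u x)^2| ≤ σ1 * (gagSq d s1 u + gagSq d s2 u))
    (σ2 : ℝ)
    (hVdiff : ∀ᵐ x : Ed d ∂volume, DifferentiableAt ℝ V x)
    (hWlim : Tendsto (Wfun d V) (cocompact (Ed d)) (𝓝 0))
    (hσ2 : 0 < σ2 ∧ σ2 < min (s1 - (β-2)*(d : ℝ)/(2*β)) ((d : ℝ)*(α-2)*(1-σ1)/4 - s2))
    (hV2 : ∀ u : Ed d → ℝ, memH d s1 s2 u →
      |∫ x : Ed d, Wfun d V x * (u x)^2| ≤ σ2 * (gagSq d s1 u + gagSq d s2 u))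
    (σ3 : ℝ)
    (hWdiff : ∀ᵐ x : Ed d ∂volume, DifferentiableAt ℝ (Wfun d V) x)
    (hσ3 : 0 ≤ σ3 ∧ σ3 ≤ s1^2*((d : ℝ)*α/2 - d - 2*s2))
    (hV3 : ∀ u : Ed d → ℝ, memH d s1 s2 u →
      |∫ x : Ed d, Yfun d V α x * (u x)^2| ≤ σ3 * (gagSq d s1 u + gagSq d s2 u))
    (a : ℝ) (ha : 0 < a) :
    (0 < (1-σ1)/2 - 2*(s2+σ2)/((d : ℝ)*(α-2))) ∧
    (∀ u ∈ Pa d s1 s2 g V a,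
      ((1-σ1)/2 - 2*(s2+σ2)/((d : ℝ)*(α-2))) * (gagSq d s1 u + gagSq d s2 u)
        ≤ Jfun d s1 s2 g V u) ∧
    (∀ M : ℝ, ∃ R : ℝ, ∀ u ∈ Pa d s1 s2 g V a,
      R ≤ gagSq d s1 u + gagSq d s2 u → M ≤ Jfun d s1 s2 g V u) := by
  have hs2pos : 0 < s2 := lt_trans hs1 hs12
  have hd0 : (0:ℝ) < d := by linarith
  have hα2 : (2:ℝ) < α := by
    have h4 : 0 < 4*s2/(d:ℝ) := by positivity
    linarith
  have hD : 0 < (d:ℝ)*(α-2) := mul_pos hd0 (by linarith)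
  have hkey : 4*(s2+σ2) < (d:ℝ)*(α-2)*(1-σ1) := by
    have h := lt_of_lt_of_le hσ2.2 (min_le_right _ _)
    have : σ2 < (d:ℝ)*(α-2)*(1-σ1)/4 - s2 := by linarith
    linarith
  have hc0 : 0 < (1-σ1)/2 - 2*(s2+σ2)/((d : ℝ)*(α-2)) := by
    have h2 : 2*(s2+σ2)/((d:ℝ)*(α-2)) < (1-σ1)/2 := by
      rw [div_lt_iff₀ hD]
      linarith
    linarith
  have hGcont : Continuous (Gfun g) := by
    have he : Gfun g = fun t => g t * t / 2 - Gtil g t := by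
      funext t
      simp only [Gtil]
      ring
    rw [he]
    exact ((hg1cont.mul continuous_id).div_const 2).sub hG3diff.continuous
  have hmain : ∀ u ∈ Pa d s1 s2 g V a,
      ((1-σ1)/2 - 2*(s2+σ2)/((d : ℝ)*(α-2))) * (gagSq d s1 u + gagSq d s2 u)
        ≤ Jfun d s1 s2 g V u := by
    intro u hu
    obtain ⟨⟨hmem, _⟩, hPf⟩ := hu
    have hA : 0 ≤ gagSq d s1 u := ENNReal.toReal_nonneg
    have hB : 0 ≤ gagSq d s2 u := ENNReal.toReal_nonneg
    have hIV := hV1 u hmem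
    have hIW := hV2 u hmem
    have hIG := myIntG g α β hα2 hαβ hG2 hGcont hG3diff.continuous u
      hmem.1.aestronglyMeasurable
    simp only [Pfun] at hPf
    simp only [Jfun, Ifun]
    set A := gagSq d s1 u with hAdef
    set B := gagSq d s2 u with hBdef
    set IW := ∫ x : Ed d, Wfun d V x * (u x)^2 with hIWdef
    set IV := ∫ x : Ed d, V x * (u x)^2 with hIVdef
    set IG := ∫ x : Ed d, Gfun g (u x) with hIGdef
    set IGt := ∫ x : Ed d, Gtil g (u x) with hIGtdef
    have hne : α - 2 ≠ 0 := by linarith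
    have h1 : (d:ℝ)*(α-2)*IG ≤ 2*(s1*A + s2*B - IW) := by
      have hIGt : (d:ℝ)*IGt = s1*A + s2*B - IW := by linarith
      calc (d:ℝ)*(α-2)*IG ≤ (d:ℝ)*(α-2)*(2/(α-2)*IGt) :=
            mul_le_mul_of_nonneg_left hIG hD.le
        _ = 2*((d:ℝ)*IGt) := by field_simp
        _ = 2*(s1*A + s2*B - IW) := by rw [hIGt]
    have h3 : 2*(s1*A + s2*B - IW) ≤ 2*(s2+σ2)*(A+B) := by
      have hIWlow : -(σ2*(A+B)) ≤ IW := (abs_le.mp hIW).1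
      have hsA : 0 ≤ (s2-s1)*A := mul_nonneg (by linarith) hA
      linarith
    have h2 : IG ≤ 2*(s2+σ2)/((d:ℝ)*(α-2)) * (A+B) := by
      rw [div_mul_eq_mul_div, le_div_iff₀ hD]
      linarith
    have hIVlow : -(σ1*(A+B)) ≤ IV := (abs_le.mp hIV).1
    linarith
  refine ⟨hc0, hmain, ?_⟩
  intro M
  refine ⟨M / ((1-σ1)/2 - 2*(s2+σ2)/((d : ℝ)*(α-2))), ?_⟩
  intro u hu hR
  have hJ := hmain u hu
  have hmul := mul_le_mul_of_nonneg_left hR hc0.le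
  have hcanc : ((1-σ1)/2 - 2*(s2+σ2)/((d : ℝ)*(α-2))) *
      (M / ((1-σ1)/2 - 2*(s2+σ2)/((d : ℝ)*(α-2)))) = M := by
    rw [mul_comm]
    exact div_mul_cancel₀ M hc0.ne'
  linarith [hmul, hJ, hcanc.ge]
end
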